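/- arXiv:2308.08694 — 2 statements merged into one kernel-verified Lean document; each statement's English description precedes it below -/
import Mathlib

section
/- Let $n, d$ be positive integers with $n \ge 2d$, and let $\lambda \vdash n$ be a partition with first part $\lambda_1 = n - d$. Let $\tilde{\lambda} \vdash d$ be the partition obtained from $\lambda$ by deleting its first row. Then the number of standard Young tableaux of shape $\lambda$ is at least $\binom{n-d}{d}$ times the number of standard Young tableaux of shape $\tilde{\lambda}$. -/
def IsPartitionList (L : List ℕ) (n : ℕ) : Prop :=
  L.Pairwise (· ≥ ·) ∧ (∀ x ∈ L, 0 < x) ∧ L.sum = n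

/-- `T` is a standard Young tableau of shape `L`: it fills the cells of the Young
diagram of `L` bijectively with `1, …, L.sum`, is `0` off the diagram, and is
strictly increasing along rows and columns. -/
def IsSYT (L : List ℕ) (T : ℕ × ℕ → ℕ) : Prop :=
  (∀ p : ℕ × ℕ, ¬ p.2 < L.getD p.1 0 → T p = 0) ∧
  Set.BijOn T {p : ℕ × ℕ | p.2 < L.getD p.1 0} (Set.Icc 1 L.sum) ∧
  (∀ i j j' : ℕ, j < j' → j' < L.getD i 0 → T (i, j) < T (i, j')) ∧
  (∀ i i' j : ℕ, i < i' → j < L.getD i' 0 → T (i, j) < T (i', j))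

/-- The number of standard Young tableaux of shape `L`. -/
noncomputable def sytCount (L : List ℕ) : ℕ :=
  Nat.card {T : ℕ × ℕ → ℕ // IsSYT L T}

/-!
Fix a `d`-element set `V ⊆ {d + 1, …, n}`; there are `(n - d).choose d` of them. Given a standard
tableau `T` of shape `λ̃ ⊢ d`, replace its entries `1, …, d` increasingly by the elements of `V`, and
put on top a first row of length `n - d` listing `{1, …, n} \ V` increasingly. Columns increase
because this complement contains `1, …, d`, so the first `d` entries of the new row are at most
`d`, below every element of `V`; and `(V, T)` can be read back off the first row and the relabelled
rows, so this is an injection.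
-/

open Set
open scoped Finset

theorem List.getD_le_sum (t : List ℕ) (i : ℕ) : t.getD i 0 ≤ t.sum := by
  rcases lt_or_ge i t.length with h | h
  · rw [List.getD_eq_getElem _ _ h]
    exact List.le_sum_of_mem (List.getElem_mem h)
  · rw [List.getD_eq_default _ _ h]
    exact Nat.zero_le _

namespace Finset

theorem strictMonoOn_nth {s : Finset ℕ} {k : ℕ} (hs : #s = k) :
    StrictMonoOn (Nat.nth (· ∈ s)) (Set.Iio k) := by
  simpa [hs] using Nat.nth_strictMonoOn s.finite_toSet

theorem bijOn_nth {s : Finset ℕ} {k : ℕ} (hs : #s = k) :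
    BijOn (Nat.nth (· ∈ s)) (Set.Iio k) s := by
  convert (strictMonoOn_nth hs).injOn.bijOn_image
  have h := Nat.image_nth_Iio_card s.finite_toSet
  simp only [finite_toSet_toFinset, hs] at h
  exact h.symm

theorem eq_of_eqOn_nth {s₁ s₂ : Finset ℕ} {k : ℕ} (h₁ : #s₁ = k) (h₂ : #s₂ = k)
    (h : EqOn (Nat.nth (· ∈ s₁)) (Nat.nth (· ∈ s₂)) (Set.Iio k)) : s₁ = s₂ := by
  have e₁ := (bijOn_nth h₁).image_eq
  have e₂ := (bijOn_nth h₂).image_eq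
  rw [← h.image_eq] at e₂
  exact_mod_cast e₁.symm.trans e₂

end Finset

theorem IsSYT.apply_mem_Icc {L : List ℕ} {T : ℕ × ℕ → ℕ} (hT : IsSYT L T) {i j : ℕ}
    (h : j < L.getD i 0) : T (i, j) ∈ Icc 1 L.sum :=
  hT.2.1.mapsTo (show (i, j) ∈ {p : ℕ × ℕ | p.2 < L.getD p.1 0} from h)

theorem IsSYT.apply_sub_one_lt {L : List ℕ} {T : ℕ × ℕ → ℕ} (hT : IsSYT L T) {i j : ℕ}
    (h : j < L.getD i 0) : T (i, j) - 1 < L.sum := by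
  have := hT.apply_mem_Icc h
  simp only [mem_Icc] at this
  omega

theorem finite_isSYT (L : List ℕ) : Finite {T : ℕ × ℕ → ℕ // IsSYT L T} := by
  set cells := {p : ℕ × ℕ | p.2 < L.getD p.1 0}
  have hcells : cells.Finite := by
    refine ((finite_Iio L.length).prod (finite_Iio L.sum)).subset ?_
    rintro ⟨i, j⟩ (h : j < L.getD i 0)
    refine ⟨show i < L.length from ?_, show j < L.sum from h.trans_le (L.getD_le_sum i)⟩
    by_contra! hi
    rw [List.getD_eq_default _ _ hi] at h
    omega
  have := hcells.to_subtype
  refine Finite.of_injective (fun T : {T // IsSYT L T} => T.2.2.1.mapsTo.restrict) ?_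
  rintro ⟨T₁, hT₁⟩ ⟨T₂, hT₂⟩ h
  ext1
  funext p
  by_cases hp : p ∈ cells
  · simpa using congrArg Subtype.val (congrFun h ⟨p, hp⟩)
  · exact (hT₁.1 p hp).trans (hT₂.1 p hp).symm

-- Entry `k` of `T` becomes `f (k - 1)`: `f` is indexed from `0`, like `Nat.nth`.
def stackRow (m : ℕ) (r f : ℕ → ℕ) (t : List ℕ) (T : ℕ × ℕ → ℕ) : ℕ × ℕ → ℕ
  | (0, j) => if j < m then r j else 0
  | (i + 1, j) => if j < t.getD i 0 then f (T (i, j) - 1) else 0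

section stackRow

variable {t : List ℕ} {T : ℕ × ℕ → ℕ} {m : ℕ} {r f : ℕ → ℕ}

theorem stackRow_zero {j : ℕ} (h : j < m) : stackRow m r f t T (0, j) = r j :=
  if_pos h

theorem stackRow_succ {i j : ℕ} (h : j < t.getD i 0) :
    stackRow m r f t T (i + 1, j) = f (T (i, j) - 1) :=
  if_pos h

theorem IsSYT.bijOn_stackRow (hT : IsSYT t T) {R F : Set ℕ}
    (hr : BijOn r (Iio m) R) (hf : BijOn f (Iio t.sum) F)
    (hRF : Disjoint R F) (hunion : R ∪ F = Icc 1 (m + t.sum)) :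
    BijOn (stackRow m r f t T) {p | p.2 < (m :: t).getD p.1 0} (Icc 1 (m + t.sum)) := by
  refine ⟨?_, ?_, ?_⟩
  · rintro ⟨_ | i, j⟩ h <;> rw [← hunion]
    · change j < m at h
      exact Or.inl (stackRow_zero h ▸ hr.mapsTo h)
    · change j < t.getD i 0 at h
      exact Or.inr (stackRow_succ h ▸ hf.mapsTo (hT.apply_sub_one_lt h))
  · rintro ⟨_ | i, j⟩ h ⟨_ | i', j'⟩ h' heq
    · change j < m at h
      change j' < m at h'
      rw [stackRow_zero h, stackRow_zero h'] at heq
      rw [hr.injOn h h' heq]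
    · change j < m at h
      change j' < t.getD i' 0 at h'
      rw [stackRow_zero h, stackRow_succ h'] at heq
      exact absurd heq (hRF.ne_of_mem (hr.mapsTo h) (hf.mapsTo (hT.apply_sub_one_lt h')))
    · change j < t.getD i 0 at h
      change j' < m at h'
      rw [stackRow_succ h, stackRow_zero h'] at heq
      exact absurd heq.symm (hRF.ne_of_mem (hr.mapsTo h') (hf.mapsTo (hT.apply_sub_one_lt h)))
    · change j < t.getD i 0 at h
      change j' < t.getD i' 0 at h'
      rw [stackRow_succ h, stackRow_succ h'] at heq
      have hpos : 1 ≤ T (i, j) ∧ 1 ≤ T (i', j') :=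
        ⟨(hT.apply_mem_Icc h).1, (hT.apply_mem_Icc h').1⟩
      have hlabels : T (i, j) - 1 = T (i', j') - 1 :=
        hf.injOn (hT.apply_sub_one_lt h) (hT.apply_sub_one_lt h') heq
      obtain ⟨rfl, rfl⟩ := Prod.mk.inj <|
        hT.2.1.injOn (show (i, j) ∈ {p : ℕ × ℕ | p.2 < t.getD p.1 0} from h) h' (by omega)
      rfl
  · intro y hy
    rw [← hunion] at hy
    rcases hy with hy | hy
    · obtain ⟨j, hj, rfl⟩ := hr.surjOn hy
      exact ⟨(0, j), hj, stackRow_zero hj⟩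
    · obtain ⟨k, hk, rfl⟩ := hf.surjOn hy
      obtain ⟨⟨i, j⟩, hij, hTk⟩ := hT.2.1.surjOn (show k + 1 ∈ Icc 1 t.sum from ⟨by omega, hk⟩)
      refine ⟨(i + 1, j), hij, ?_⟩
      rw [stackRow_succ hij, hTk, Nat.add_sub_cancel]

theorem isSYT_stackRow (hT : IsSYT t T) {R F : Set ℕ}
    (hr : StrictMonoOn r (Iio m)) (hf : StrictMonoOn f (Iio t.sum))
    (hrR : BijOn r (Iio m) R) (hfF : BijOn f (Iio t.sum) F)
    (hRF : Disjoint R F) (hunion : R ∪ F = Icc 1 (m + t.sum))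
    (hm : t.sum ≤ m) (hcol : ∀ j < t.sum, ∀ k < t.sum, r j < f k) :
    IsSYT (m :: t) (stackRow m r f t T) := by
  have hf_pos {k : ℕ} (hk : k < t.sum) : 0 < f k :=
    (hunion ▸ mem_union_right R (hfF.mapsTo hk) : f k ∈ Icc 1 (m + t.sum)).1
  refine ⟨?_, ?_, ?_, ?_⟩
  · rintro ⟨_ | i, j⟩ h
    · exact if_neg h
    · exact if_neg h
  · rw [List.sum_cons]
    exact hT.bijOn_stackRow hrR hfF hRF hunion
  · rintro (_ | i) j j' hjj' hj'
    · change j' < m at hj'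
      rw [stackRow_zero (hjj'.trans hj'), stackRow_zero hj']
      exact hr (hjj'.trans hj') hj' hjj'
    · change j' < t.getD i 0 at hj'
      have hj := hjj'.trans hj'
      rw [stackRow_succ hj, stackRow_succ hj']
      have := hT.2.2.1 i j j' hjj' hj'
      have := (hT.apply_mem_Icc hj).1
      exact hf (hT.apply_sub_one_lt hj) (hT.apply_sub_one_lt hj') (by omega)
  · rintro i (_ | b) j hib hj
    · omega
    change j < t.getD b 0 at hj
    rw [stackRow_succ hj]
    rcases i with _ | a
    · have hjd : j < t.sum := hj.trans_le (t.getD_le_sum b)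
      rw [stackRow_zero (by omega)]
      exact hcol j hjd _ (hT.apply_sub_one_lt hj)
    · by_cases ha : j < t.getD a 0
      · rw [stackRow_succ ha]
        have := hT.2.2.2 a b j (by omega) hj
        have := (hT.apply_mem_Icc ha).1
        exact hf (hT.apply_sub_one_lt ha) (hT.apply_sub_one_lt hj) (by omega)
      · rw [show stackRow m r f t T (a + 1, j) = 0 from if_neg ha]
        exact hf_pos (hT.apply_sub_one_lt hj)

theorem IsSYT.eq_of_stackRow_eq {T₁ T₂ : ℕ × ℕ → ℕ} (h₁ : IsSYT t T₁) (h₂ : IsSYT t T₂)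
    (hf : InjOn f (Iio t.sum)) (h : stackRow m r f t T₁ = stackRow m r f t T₂) : T₁ = T₂ := by
  funext ⟨i, j⟩
  by_cases hij : j < t.getD i 0
  · have hval := congrFun h (i + 1, j)
    rw [stackRow_succ hij, stackRow_succ hij] at hval
    have := hf (h₁.apply_sub_one_lt hij) (h₂.apply_sub_one_lt hij) hval
    have := (h₁.apply_mem_Icc hij).1
    have := (h₂.apply_mem_Icc hij).1
    omega
  · exact (h₁.1 _ hij).trans (h₂.1 _ hij).symm

end stackRow

section complement

variable {m d : ℕ} {V : Finset ℕ}

theorem subset_Icc_one_of_mem_powersetCard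
    (hV : V ∈ Finset.powersetCard d (Finset.Icc (d + 1) (m + d))) :
    V ⊆ Finset.Icc 1 (m + d) :=
  (Finset.mem_powersetCard.1 hV).1.trans (Finset.Icc_subset_Icc (by omega) le_rfl)

theorem card_Icc_sdiff_of_mem_powersetCard
    (hV : V ∈ Finset.powersetCard d (Finset.Icc (d + 1) (m + d))) :
    #(Finset.Icc 1 (m + d) \ V) = m := by
  rw [Finset.card_sdiff_of_subset (subset_Icc_one_of_mem_powersetCard hV), Nat.card_Icc,
    (Finset.mem_powersetCard.1 hV).2]
  omega

theorem nth_Icc_sdiff_lt_of_mem_powersetCard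
    (hV : V ∈ Finset.powersetCard d (Finset.Icc (d + 1) (m + d))) {j : ℕ} (hj : j < d) :
    Nat.nth (· ∈ Finset.Icc 1 (m + d) \ V) j < d + 1 := by
  refine Nat.nth_lt_of_lt_count (hj.trans_le ?_)
  rw [Nat.count_eq_card_filter_range]
  calc d = #(Finset.Icc 1 d) := by simp
    _ ≤ _ := Finset.card_le_card fun x hx => by
      have := Finset.mem_Icc.1 hx
      have hV_ge {y : ℕ} (hy : y ∈ V) : d + 1 ≤ y :=
        (Finset.mem_Icc.1 ((Finset.mem_powersetCard.1 hV).1 hy)).1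
      simp only [Finset.mem_filter, Finset.mem_range, Finset.mem_sdiff, Finset.mem_Icc]
      exact ⟨by omega, ⟨by omega, by omega⟩, fun hxV => by have := hV_ge hxV; omega⟩

end complement

noncomputable def stackCompl (m : ℕ) (V : Finset ℕ) (t : List ℕ) (T : ℕ × ℕ → ℕ) : ℕ × ℕ → ℕ :=
  stackRow m (Nat.nth (· ∈ Finset.Icc 1 (m + t.sum) \ V)) (Nat.nth (· ∈ V)) t T

section stackCompl

variable {t : List ℕ} {m : ℕ}

theorem isSYT_stackCompl {T : ℕ × ℕ → ℕ} (hT : IsSYT t T) (hm : t.sum ≤ m) {V : Finset ℕ}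
    (hV : V ∈ Finset.powersetCard t.sum (Finset.Icc (t.sum + 1) (m + t.sum))) :
    IsSYT (m :: t) (stackCompl m V t T) := by
  have hC_card := card_Icc_sdiff_of_mem_powersetCard hV
  have hV_card : #V = t.sum := (Finset.mem_powersetCard.1 hV).2
  refine isSYT_stackRow hT (Finset.strictMonoOn_nth hC_card) (Finset.strictMonoOn_nth hV_card)
    (Finset.bijOn_nth hC_card) (Finset.bijOn_nth hV_card) ?_ ?_ hm ?_
  · exact Finset.disjoint_coe.2 Finset.sdiff_disjoint
  · rw [← Finset.coe_union, Finset.sdiff_union_of_subset (subset_Icc_one_of_mem_powersetCard hV),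
      Finset.coe_Icc]
  · intro j hj k hk
    have hk_mem := (Finset.mem_powersetCard.1 hV).1 ((Finset.bijOn_nth hV_card).mapsTo hk)
    exact (nth_Icc_sdiff_lt_of_mem_powersetCard hV hj).trans_le (Finset.mem_Icc.1 hk_mem).1

theorem eq_of_stackCompl_eq {T₁ T₂ : ℕ × ℕ → ℕ} (hT₁ : IsSYT t T₁) (hT₂ : IsSYT t T₂)
    {V₁ V₂ : Finset ℕ}
    (hV₁ : V₁ ∈ Finset.powersetCard t.sum (Finset.Icc (t.sum + 1) (m + t.sum)))
    (hV₂ : V₂ ∈ Finset.powersetCard t.sum (Finset.Icc (t.sum + 1) (m + t.sum)))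
    (h : stackCompl m V₁ t T₁ = stackCompl m V₂ t T₂) : V₁ = V₂ ∧ T₁ = T₂ := by
  have hC : Finset.Icc 1 (m + t.sum) \ V₁ = Finset.Icc 1 (m + t.sum) \ V₂ :=
    Finset.eq_of_eqOn_nth (card_Icc_sdiff_of_mem_powersetCard hV₁)
      (card_Icc_sdiff_of_mem_powersetCard hV₂) fun j hj => by
        simpa only [stackCompl, stackRow_zero hj] using congrFun h (0, j)
  have hV : V₁ = V₂ := by
    rw [← Finset.sdiff_sdiff_eq_self (subset_Icc_one_of_mem_powersetCard hV₁), hC,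
      Finset.sdiff_sdiff_eq_self (subset_Icc_one_of_mem_powersetCard hV₂)]
  subst hV
  have hV_card : #V₁ = t.sum := (Finset.mem_powersetCard.1 hV₁).2
  exact ⟨rfl, hT₁.eq_of_stackRow_eq hT₂ (Finset.strictMonoOn_nth hV_card).injOn h⟩

theorem choose_mul_sytCount_le_sytCount_cons (hm : t.sum ≤ m) :
    m.choose t.sum * sytCount t ≤ sytCount (m :: t) := by
  let 𝒱 := Finset.powersetCard t.sum (Finset.Icc (t.sum + 1) (m + t.sum))
  let stack (x : 𝒱 × {T // IsSYT t T}) : {T // IsSYT (m :: t) T} :=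
    ⟨_, isSYT_stackCompl x.2.2 hm x.1.2⟩
  have h_inj : Function.Injective stack := by
    rintro ⟨⟨V₁, hV₁⟩, T₁, hT₁⟩ ⟨⟨V₂, hV₂⟩, T₂, hT₂⟩ h
    obtain ⟨rfl, rfl⟩ := eq_of_stackCompl_eq hT₁ hT₂ hV₁ hV₂ (congrArg Subtype.val h)
    rfl
  have := finite_isSYT (m :: t)
  calc m.choose t.sum * sytCount t = Nat.card (𝒱 × {T // IsSYT t T}) := by
        rw [Nat.card_prod, Nat.card_eq_finsetCard, Finset.card_powersetCard, Nat.card_Icc,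
          sytCount]
        congr 2
        omega
    _ ≤ sytCount (m :: t) := Nat.card_le_card_of_injective stack h_inj

end stackCompl

theorem syt_lower_bound_general (n d : ℕ) (hnd : 2 * d ≤ n)
    (L : List ℕ) (hL : IsPartitionList L n) (h1 : L.headD 0 = n - d) :
    (n - d).choose d * sytCount L.tail ≤ sytCount L := by
  obtain ⟨-, -, hL_sum⟩ := hL
  cases L with
  | nil =>
    obtain rfl : n = 0 := hL_sum.symm
    obtain rfl : d = 0 := by omega
    simp
  | cons a t =>
    obtain rfl : a = n - d := h1
    obtain rfl : t.sum = d := by simp only [List.sum_cons] at hL_sum; omega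
    exact choose_mul_sytCount_le_sytCount_cons (by omega)

theorem syt_lower_bound (n d : ℕ) (hd : 0 < d) (hnd : 2 * d ≤ n)
    (L : List ℕ) (hL : IsPartitionList L n) (h1 : L.headD 0 = n - d) :
    (n - d).choose d * sytCount L.tail ≤ sytCount L :=
  syt_lower_bound_general n d hnd L hL h1
end

section
/- For positive integers $d$ and $r$ with $r > d$, let $F_{r,d}$ denote the event that a uniformly random permutation of $\{1,\dots,r\}$ has all its cycles of length strictly greater than $d$. Then $\Pr[F_{r,d}] \ge \frac{1}{10d}$. -/
/-!
Write `p_r` for the probability that a random permutation of `r` points has all cycles longer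
than `d`, so `p_0 = 1`. The cycle through a fixed point has length `k` with probability `1 / r`,
and given that, the remaining `r - k` points carry a uniform random permutation; hence
`r p_r ≥ ∑_{k = d + 1}^{r} p_{r - k}`. By strong induction `p_j ≥ 1 / (2d + 1)` for `j > d`:
the terms `j = 0` and `d < j < r - d` already give
`r p_r ≥ 1 + (r - 2d - 1) / (2d + 1) = r / (2d + 1)`.
-/

/-- The probability that a uniformly random permutation of `{1, …, r}` has all its
cycles (including fixed points) of length strictly greater than `d`.  Since
`Equiv.Perm.cycleType` lists only the nontrivial cycle lengths, this event is
`σ.cycleType.sum = r` (no fixed points) together with all entries of the cycle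
type exceeding `d`. -/
noncomputable def probAllCyclesLong (d r : ℕ) : ℝ :=
  (Nat.card {σ : Equiv.Perm (Fin r) //
      σ.cycleType.sum = r ∧ ∀ k ∈ σ.cycleType, d < k} : ℝ) / (Nat.factorial r : ℝ)

open Equiv Equiv.Perm Finset
open scoped Nat

theorem Equiv.Perm.toList_mul_of_apply_eq_self {α : Type*} [Fintype α] [DecidableEq α]
    {f g : Perm α} (h : Commute f g) {x : α} (hx : g x = x) :
    toList (f * g) x = toList f x := by
  have hpow : ∀ j : ℕ, ((f * g) ^ j) x = (f ^ j) x := fun j => by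
    rw [h.mul_pow, mul_apply, pow_apply_eq_self_of_apply_eq_self hx]
  refine List.ext_getElem ?_ fun j _ _ => ?_
  · rw [length_toList, length_toList, cycleOf_mul_of_apply_right_eq_self h x hx]
  · rw [getElem_toList, getElem_toList, hpow]

def AllCyclesLong (d : ℕ) {n : ℕ} (σ : Perm (Fin n)) : Prop :=
  σ.cycleType.sum = n ∧ ∀ k ∈ σ.cycleType, d < k

noncomputable def numAllCyclesLong (d n : ℕ) : ℕ :=
  Nat.card {σ : Perm (Fin n) // AllCyclesLong d σ}

theorem numAllCyclesLong_zero (d : ℕ) : numAllCyclesLong d 0 = 1 := by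
  have : Unique {σ : Perm (Fin 0) // AllCyclesLong d σ} :=
    { default := ⟨1, by simp [AllCyclesLong]⟩
      uniq := fun _ => Subsingleton.elim _ _ }
  exact Nat.card_unique

section InsertCycle

variable {n m : ℕ} (w : Fin m ↪ {x : Fin (n + 1) // x ≠ 0})

def cycleList : List (Fin (n + 1)) := 0 :: List.ofFn fun i => (w i : Fin (n + 1))

theorem nodup_cycleList : (cycleList w).Nodup := by
  refine List.nodup_cons.mpr ⟨fun h => ?_, List.nodup_ofFn.mpr fun i j hij => ?_⟩
  · obtain ⟨i, hi⟩ := List.mem_ofFn.mp h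
    exact (w i).2 hi
  · exact w.injective (Subtype.ext hij)

@[simp]
theorem length_cycleList : (cycleList w).length = m + 1 := by simp [cycleList]

theorem card_compl_cycleList : (cycleList w).toFinsetᶜ.card = n - m := by
  rw [card_compl, List.card_toFinset, (nodup_cycleList w).dedup, length_cycleList,
    Fintype.card_fin, Nat.add_sub_add_right]

noncomputable def complEquiv : Fin (n - m) ≃ {x // x ∈ (cycleList w).toFinsetᶜ} :=
  ((cycleList w).toFinsetᶜ.orderIsoOfFin (card_compl_cycleList w)).toEquiv

/-- Close the cycle `(0 w₀ … w_{m-1})` and let `τ` act on the remaining `n - m` points. -/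
noncomputable def insertCycle (τ : Perm (Fin (n - m))) : Perm (Fin (n + 1)) :=
  (cycleList w).formPerm * τ.extendDomain (complEquiv w)

variable {w}

theorem support_formPerm_cycleList (hm : 1 ≤ m) :
    (cycleList w).formPerm.support = (cycleList w).toFinset :=
  List.support_formPerm_of_nodup _ (nodup_cycleList w) fun x hx => by
    have := congrArg List.length hx
    simp at this
    omega

theorem disjoint_formPerm_extendDomain (hm : 1 ≤ m) (τ : Perm (Fin (n - m))) :
    Disjoint (cycleList w).formPerm (τ.extendDomain (complEquiv w)) := by
  rw [disjoint_iff_disjoint_support, support_formPerm_cycleList hm, support_extend_domain]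
  refine Finset.disjoint_left.mpr fun x hx hx' => ?_
  obtain ⟨a, -, rfl⟩ := Finset.mem_map.mp hx'
  exact Finset.mem_compl.mp (complEquiv w a).2 hx

theorem cycleType_insertCycle (hm : 1 ≤ m) (τ : Perm (Fin (n - m))) :
    (insertCycle w τ).cycleType = (m + 1) ::ₘ τ.cycleType := by
  rw [insertCycle, (disjoint_formPerm_extendDomain hm τ).cycleType_mul,
    (List.isCycle_formPerm (nodup_cycleList w) (by simp; omega)).cycleType,
    cycleType_extendDomain, support_formPerm_cycleList hm, List.card_toFinset,
    (nodup_cycleList w).dedup, length_cycleList]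
  rfl

theorem toList_insertCycle (hm : 1 ≤ m) (τ : Perm (Fin (n - m))) :
    toList (insertCycle w τ) 0 = cycleList w := by
  have hfix : τ.extendDomain (complEquiv w) 0 = 0 :=
    extendDomain_apply_not_subtype _ _ (by simp [cycleList])
  rw [insertCycle, toList_mul_of_apply_eq_self (disjoint_formPerm_extendDomain hm τ).commute hfix]
  exact toList_formPerm_nontrivial _ (by simp; omega) (nodup_cycleList w)

theorem allCyclesLong_insertCycle {d : ℕ} (hd : 1 ≤ d) (hdm : d ≤ m) (hmn : m ≤ n)
    {τ : Perm (Fin (n - m))} (hτ : AllCyclesLong d τ) : AllCyclesLong d (insertCycle w τ) := by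
  rw [AllCyclesLong, cycleType_insertCycle (by omega), Multiset.sum_cons, hτ.1]
  refine ⟨by omega, fun k hk => ?_⟩
  rcases Multiset.mem_cons.mp hk with rfl | hk
  · omega
  · exact hτ.2 k hk

/-- `m + 1` is the length of the cycle through `0`. -/
abbrev InsertionData (d n : ℕ) :=
  Σ m : Ico d (n + 1),
    (Fin m ↪ {x : Fin (n + 1) // x ≠ 0}) × {τ : Perm (Fin (n - m)) // AllCyclesLong d τ}

theorem insertCycle_injective {d : ℕ} (hd : 1 ≤ d) :
    Function.Injective fun x : InsertionData d n => insertCycle x.2.1 x.2.2.1 := by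
  rintro ⟨⟨m, hm⟩, w, τ, hτ⟩ ⟨⟨m', hm'⟩, w', τ', hτ'⟩ h
  have hm1 : 1 ≤ m := by have := (mem_Ico.mp hm).1; omega
  have hm1' : 1 ≤ m' := by have := (mem_Ico.mp hm').1; omega
  have hlist : cycleList w = cycleList w' := by
    rw [← toList_insertCycle hm1 τ, ← toList_insertCycle hm1' τ']
    exact congrArg (toList · 0) h
  obtain rfl : m = m' := by simpa using congrArg List.length hlist
  obtain rfl : w = w' := by
    have := List.ofFn_injective (List.cons_injective hlist)
    exact DFunLike.ext _ _ fun i => Subtype.ext (congrFun this i)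
  obtain rfl : τ = τ' := extendDomainHom_injective (complEquiv w) (mul_left_cancel h)
  rfl

end InsertCycle

theorem sum_descFactorial_mul_numAllCyclesLong_le {d : ℕ} (hd : 1 ≤ d) (n : ℕ) :
    ∑ m ∈ Ico d (n + 1), n.descFactorial m * numAllCyclesLong d (n - m) ≤
      numAllCyclesLong d (n + 1) := by
  have hinj : Function.Injective fun x : InsertionData d n =>
      (⟨insertCycle x.2.1 x.2.2.1, allCyclesLong_insertCycle hd (mem_Ico.mp x.1.2).1
        (Nat.lt_succ_iff.mp (mem_Ico.mp x.1.2).2) x.2.2.2⟩ : {σ // AllCyclesLong d σ}) :=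
    fun x y h => insertCycle_injective hd (congrArg Subtype.val h)
  refine le_of_eq_of_le ?_ (Nat.card_le_card_of_injective _ hinj)
  rw [Nat.card_sigma, ← sum_coe_sort]
  refine Fintype.sum_congr _ _ fun m => ?_
  rw [Nat.card_prod, Nat.card_eq_fintype_card (α := _ ↪ _), Fintype.card_embedding_eq]
  simp [numAllCyclesLong]

theorem probAllCyclesLong_eq (d n : ℕ) : probAllCyclesLong d n = numAllCyclesLong d n / n ! := rfl

theorem probAllCyclesLong_zero (d : ℕ) : probAllCyclesLong d 0 = 1 := by
  simp [probAllCyclesLong_eq, numAllCyclesLong_zero]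

theorem probAllCyclesLong_nonneg (d n : ℕ) : 0 ≤ probAllCyclesLong d n := by
  rw [probAllCyclesLong_eq]; positivity

theorem sum_probAllCyclesLong_le {d : ℕ} (hd : 1 ≤ d) (n : ℕ) :
    ∑ j ∈ range (n + 1 - d), probAllCyclesLong d j ≤
      (n + 1) * probAllCyclesLong d (n + 1) := by
  have hterm : ∀ m ∈ Ico d (n + 1),
      probAllCyclesLong d (n - m) =
        (n.descFactorial m * numAllCyclesLong d (n - m) : ℕ) / (n ! : ℝ) := by
    intro m hm
    have hfac := Nat.factorial_mul_descFactorial (Nat.lt_succ_iff.mp (mem_Ico.mp hm).2)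
    rw [probAllCyclesLong_eq, ← hfac]
    have : (n.descFactorial m : ℝ) ≠ 0 := by
      exact_mod_cast (Nat.descFactorial_pos.mpr (Nat.lt_succ_iff.mp (mem_Ico.mp hm).2)).ne'
    push_cast
    field_simp
  have hreflect : ∑ j ∈ range (n + 1 - d), probAllCyclesLong d j =
      ∑ m ∈ Ico d (n + 1), probAllCyclesLong d (n - m) := by
    rw [sum_Ico_reflect _ _ le_rfl, Nat.sub_self, Nat.Ico_zero_eq_range]
  rw [hreflect, sum_congr rfl hterm, ← sum_div, probAllCyclesLong_eq, Nat.factorial_succ]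
  calc (∑ m ∈ Ico d (n + 1), (n.descFactorial m * numAllCyclesLong d (n - m) : ℕ) : ℝ) / n !
      ≤ numAllCyclesLong d (n + 1) / n ! := by
        gcongr
        exact_mod_cast sum_descFactorial_mul_numAllCyclesLong_le hd n
    _ = (n + 1) * (numAllCyclesLong d (n + 1) / ((n + 1) * n ! : ℕ)) := by
        push_cast
        field_simp

theorem one_div_two_mul_add_one_le_probAllCyclesLong {d r : ℕ} (hd : 1 ≤ d) (hdr : d < r) :
    1 / (2 * d + 1 : ℝ) ≤ probAllCyclesLong d r := by
  induction r using Nat.strong_induction_on with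
  | _ r ih =>
  obtain ⟨n, rfl⟩ : ∃ n, r = n + 1 := ⟨r - 1, by omega⟩
  set c : ℝ := 1 / (2 * d + 1)
  have hc : 0 ≤ c := by positivity
  have hcd : (2 * d + 1) * c = 1 := mul_one_div_cancel (by positivity)
  have hsplit : 0 ∉ Ioo d (n + 1 - d) ∧ insert 0 (Ioo d (n + 1 - d)) ⊆ range (n + 1 - d) := by
    refine ⟨by simp, fun j hj => ?_⟩
    rcases mem_insert.mp hj with rfl | hj <;> simp at * <;> omega
  have hlong : ∀ j ∈ Ioo d (n + 1 - d), c ≤ probAllCyclesLong d j :=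
    fun j hj => ih j (by simp at hj; omega) (mem_Ioo.mp hj).1
  have hcard : (n : ℝ) - 2 * d ≤ (Ioo d (n + 1 - d)).card := by
    have : n ≤ (Ioo d (n + 1 - d)).card + 2 * d := by rw [Nat.card_Ioo]; omega
    rw [sub_le_iff_le_add]
    exact_mod_cast this
  have hlower : (n + 1) * c ≤ ∑ j ∈ range (n + 1 - d), probAllCyclesLong d j :=
    calc (n + 1) * c ≤ 1 + (n - 2 * d) * c := by linarith
      _ ≤ 1 + (Ioo d (n + 1 - d)).card * c := by gcongr
      _ ≤ probAllCyclesLong d 0 + ∑ j ∈ Ioo d (n + 1 - d), probAllCyclesLong d j := by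
          rw [probAllCyclesLong_zero, ← nsmul_eq_mul]
          gcongr
          exact card_nsmul_le_sum _ _ _ hlong
      _ = ∑ j ∈ insert 0 (Ioo d (n + 1 - d)), probAllCyclesLong d j :=
          (sum_insert hsplit.1).symm
      _ ≤ _ := sum_le_sum_of_subset_of_nonneg hsplit.2 fun j _ _ => probAllCyclesLong_nonneg d j
  exact le_of_mul_le_mul_left (hlower.trans (sum_probAllCyclesLong_le hd n)) (by positivity)

theorem prob_all_cycles_long_ge (d r : ℕ) (hd : 1 ≤ d) (hr : d < r) :
    1 / (10 * d : ℝ) ≤ probAllCyclesLong d r := by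
  have hd' : (1 : ℝ) ≤ d := by exact_mod_cast hd
  calc 1 / (10 * d : ℝ) ≤ 1 / (2 * d + 1) :=
        one_div_le_one_div_of_le (by positivity) (by linarith)
    _ ≤ probAllCyclesLong d r := one_div_two_mul_add_one_le_probAllCyclesLong hd hr
end
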